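/- arXiv:2109.09134 — 2 statements merged into one kernel-verified Lean document; each statement's English description precedes it below -/
import Mathlib

section
/- Let δ, b > 0, e_δ(x) := exp(δ(√(x²+1) − 1)), and 𝓜_b := {μ ∈ 𝒫(ℝ) : ∫ e_δ dμ ≤ b}. For measures μ_n, μ ∈ 𝓜_b, the sequence μ_n converges weakly to μ if and only if ∫ x^k dμ_n(x) → ∫ x^k dμ(x) for every k ∈ ℕ. -/
open MeasureTheory Real Filter Topology BoundedContinuousFunction FourierTransform Manifold NNReal

set_option linter.unusedSectionVars false
noncomputable section

namespace WCIM

/-- The exponential weight function. -/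
def E (δ x : ℝ) : ℝ := Real.exp (δ * (Real.sqrt (x ^ 2 + 1) - 1))

lemma E_pos (δ x : ℝ) : 0 < E δ x := Real.exp_pos _

lemma continuous_E (δ : ℝ) : Continuous (E δ) := by
  unfold E; fun_prop

lemma exp_abs_le {δ : ℝ} (hδ : 0 < δ) (x : ℝ) :
    Real.exp (δ * |x|) ≤ Real.exp δ * E δ x := by
  rw [E, ← Real.exp_add]
  apply Real.exp_le_exp.mpr
  have h : |x| ≤ Real.sqrt (x ^ 2 + 1) := by
    rw [← Real.sqrt_sq_eq_abs]
    exact Real.sqrt_le_sqrt (by linarith)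
  nlinarith [hδ.le]

/-- Uniform moment bound constant. -/
def M (δ b : ℝ) (k : ℕ) : ℝ := (k.factorial : ℝ) / δ ^ k * Real.exp δ * b

lemma M_nonneg {δ b : ℝ} (hδ : 0 < δ) (hb : 0 ≤ b) (k : ℕ) : 0 ≤ M δ b k := by
  unfold M; positivity

lemma abs_pow_le_E {δ : ℝ} (hδ : 0 < δ) (k : ℕ) (x : ℝ) :
    |x| ^ k ≤ (k.factorial : ℝ) / δ ^ k * Real.exp δ * E δ x := by
  have h1 : (δ * |x|) ^ k / (k.factorial : ℝ) ≤ Real.exp (δ * |x|) :=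
    Real.pow_div_factorial_le_exp _ (by positivity) k
  have h2 := exp_abs_le hδ x
  have hδk : (0:ℝ) < δ ^ k := by positivity
  have hfk : (0:ℝ) < (k.factorial : ℝ) := by positivity
  rw [mul_pow, div_le_iff₀ hfk] at h1
  have h3 : δ ^ k * |x| ^ k ≤ (k.factorial : ℝ) * (Real.exp δ * E δ x) := by
    calc δ ^ k * |x| ^ k ≤ Real.exp (δ * |x|) * (k.factorial : ℝ) := h1
      _ ≤ Real.exp δ * E δ x * (k.factorial : ℝ) := by
          have := (E_pos δ x).le
          have := (Real.exp_pos (δ * |x|)).le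
          nlinarith
      _ = (k.factorial : ℝ) * (Real.exp δ * E δ x) := by ring
  calc |x| ^ k = δ ^ k * |x| ^ k / δ ^ k := by field_simp
    _ ≤ (k.factorial : ℝ) * (Real.exp δ * E δ x) / δ ^ k := by gcongr
    _ = (k.factorial : ℝ) / δ ^ k * Real.exp δ * E δ x := by ring

/-- The exponential moment bound hypothesis. -/
def HB (δ b : ℝ) (ν : Measure ℝ) : Prop :=
  ∫⁻ x, ENNReal.ofReal (Real.exp (δ * (Real.sqrt (x ^ 2 + 1) - 1))) ∂ν ≤ ENNReal.ofReal b

section MeasureBounds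

variable {δ b : ℝ} (hδ : 0 < δ) (hb : 0 < b)
variable (ν : Measure ℝ) [IsProbabilityMeasure ν] (hν : HB δ b ν)

include hν in
lemma integrable_E : Integrable (E δ) ν := by
  refine ⟨(continuous_E δ).aestronglyMeasurable, ?_⟩
  show ∫⁻ x, (‖E δ x‖₊ : ENNReal) ∂ν < ⊤
  calc ∫⁻ x, (‖E δ x‖₊ : ENNReal) ∂ν = ∫⁻ x, ENNReal.ofReal (E δ x) ∂ν := by
        congr 1; funext x; exact Real.enorm_eq_ofReal (E_pos δ x).le
    _ ≤ ENNReal.ofReal b := hν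
    _ < ⊤ := ENNReal.ofReal_lt_top

include hb hν in
lemma integral_E_le : ∫ x, E δ x ∂ν ≤ b := by
  rw [integral_eq_lintegral_of_nonneg_ae (ae_of_all _ fun x => (E_pos δ x).le)
    (continuous_E δ).aestronglyMeasurable]
  exact ENNReal.toReal_le_of_le_ofReal hb.le hν

include hδ hν in
lemma integrable_abs_pow (k : ℕ) : Integrable (fun x : ℝ => |x| ^ k) ν := by
  refine Integrable.mono' ((integrable_E ν hν).const_mul
    ((k.factorial : ℝ) / δ ^ k * Real.exp δ)) ((continuous_abs.pow k).aestronglyMeasurable) (ae_of_all _ fun x => ?_)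
  rw [Real.norm_eq_abs, abs_of_nonneg (by positivity)]
  exact abs_pow_le_E hδ k x

include hδ hb hν in
lemma integral_abs_pow_le (k : ℕ) : ∫ x, |x| ^ k ∂ν ≤ M δ b k := by
  have h1 : ∫ x, |x| ^ k ∂ν ≤ ∫ x, (k.factorial : ℝ) / δ ^ k * Real.exp δ * E δ x ∂ν := by
    refine integral_mono (integrable_abs_pow hδ ν hν k)
      ((integrable_E ν hν).const_mul _) (fun x => abs_pow_le_E hδ k x)
  rw [integral_const_mul] at h1
  calc ∫ x, |x| ^ k ∂ν ≤ (k.factorial : ℝ) / δ ^ k * Real.exp δ * ∫ x, E δ x ∂ν := h1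
    _ ≤ (k.factorial : ℝ) / δ ^ k * Real.exp δ * b := by
        have : (0:ℝ) ≤ (k.factorial : ℝ) / δ ^ k * Real.exp δ := by positivity
        exact mul_le_mul_of_nonneg_left (integral_E_le hb ν hν) this
    _ = M δ b k := rfl

include hδ hb hν in
lemma integrable_pow (k : ℕ) : Integrable (fun x : ℝ => x ^ k) ν := by
  refine Integrable.mono' (integrable_abs_pow hδ ν hν k) ((continuous_pow k).aestronglyMeasurable)
    (ae_of_all _ fun x => ?_)
  rw [Real.norm_eq_abs, abs_pow]

end MeasureBounds

/-! ### Forward direction: truncation -/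

section Forward

variable {δ b : ℝ} (hδ : 0 < δ) (hb : 0 < b)

/-- Truncation of `x ^ k` at level `R ^ k`, as a bounded continuous function. -/
def trunc (k : ℕ) (R : ℝ) : ℝ →ᵇ ℝ :=
  BoundedContinuousFunction.ofNormedAddCommGroup
    (fun x => max (-(R ^ k)) (min (R ^ k) (x ^ k))) (by fun_prop) |R ^ k|
    (by
      intro x
      rw [Real.norm_eq_abs, abs_le]
      constructor
      · exact le_trans (neg_le_neg (le_abs_self _)) (le_max_left _ _)
      · exact max_le (neg_le_abs _) (le_trans (min_le_left _ _) (le_abs_self _)))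

lemma trunc_apply (k : ℕ) (R x : ℝ) :
    trunc k R x = max (-(R ^ k)) (min (R ^ k) (x ^ k)) := rfl

lemma trunc_err {k : ℕ} {R : ℝ} (hR : 1 ≤ R) (x : ℝ) :
    |x ^ k - trunc k R x| ≤ 2 / R ^ 2 * |x| ^ (k + 2) := by
  have hR0 : (0:ℝ) < R := lt_of_lt_of_le one_pos hR
  have hRk : (0:ℝ) ≤ R ^ k := by positivity
  rcases le_or_gt |x| R with h | h
  · have h1 : |x ^ k| ≤ R ^ k := by
      rw [abs_pow]; exact pow_le_pow_left₀ (abs_nonneg x) h k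
    rw [abs_le] at h1
    rw [trunc_apply, min_eq_right h1.2, max_eq_right h1.1, sub_self, abs_zero]
    positivity
  · have hxk : R ^ k ≤ |x| ^ k := pow_le_pow_left₀ hR0.le h.le k
    have h1 : |x ^ k - trunc k R x| ≤ |x ^ k| + |trunc k R x| := abs_sub _ _
    have h2 : |trunc k R x| ≤ R ^ k := by
      rw [trunc_apply, abs_le]
      refine ⟨le_max_left _ _, max_le (by linarith) (min_le_left _ _)⟩
    have h3 : |x ^ k - trunc k R x| ≤ 2 * |x| ^ k := by
      rw [abs_pow] at h1; linarith
    have h4 : |x| ^ (k + 2) = |x| ^ k * |x| ^ 2 := by ring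
    have h5 : R ^ 2 ≤ |x| ^ 2 := by nlinarith [abs_nonneg x]
    have hxknn : (0:ℝ) ≤ |x| ^ k := by positivity
    calc |x ^ k - trunc k R x| ≤ 2 * |x| ^ k := h3
      _ ≤ 2 / R ^ 2 * |x| ^ (k + 2) := by
          rw [h4, div_mul_eq_mul_div, le_div_iff₀ (by positivity : (0:ℝ) < R ^ 2)]
          nlinarith [hxknn, h5]

include hδ hb in
lemma integral_trunc_close (k : ℕ) {R : ℝ} (hR : 1 ≤ R)
    (ν : Measure ℝ) [IsProbabilityMeasure ν] (hν : HB δ b ν) :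
    |(∫ x, x ^ k ∂ν) - ∫ x, trunc k R x ∂ν| ≤ 2 / R ^ 2 * M δ b (k + 2) := by
  have hpint := integrable_pow hδ hb ν hν k
  have htint : Integrable (fun x => trunc k R x) ν := (trunc k R).integrable ν
  rw [← integral_sub hpint htint]
  have h1 : |∫ x, (x ^ k - trunc k R x) ∂ν| ≤ ∫ x, |x ^ k - trunc k R x| ∂ν := by
    have := norm_integral_le_integral_norm (μ := ν) (fun x => x ^ k - trunc k R x)
    simpa [Real.norm_eq_abs] using this
  refine h1.trans ?_
  have h2 : ∫ x, |x ^ k - trunc k R x| ∂ν ≤ ∫ x, 2 / R ^ 2 * |x| ^ (k + 2) ∂ν := by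
    refine integral_mono ((hpint.sub htint).abs)
      ((integrable_abs_pow hδ ν hν (k + 2)).const_mul _) (fun x => trunc_err hR x)
  refine h2.trans ?_
  rw [integral_const_mul]
  have hRnn : (0:ℝ) ≤ 2 / R ^ 2 := by positivity
  exact mul_le_mul_of_nonneg_left (integral_abs_pow_le hδ hb ν hν (k + 2)) hRnn

include hδ hb in
lemma forward
    (μn : ℕ → ProbabilityMeasure ℝ) (μ : ProbabilityMeasure ℝ)
    (hμn : ∀ n, HB δ b (μn n : Measure ℝ)) (hμ : HB δ b (μ : Measure ℝ))
    (h : Tendsto μn atTop (𝓝 μ)) (k : ℕ) :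
    Tendsto (fun n => ∫ x, x ^ k ∂(μn n : Measure ℝ)) atTop
      (𝓝 (∫ x, x ^ k ∂(μ : Measure ℝ))) := by
  rw [MeasureTheory.ProbabilityMeasure.tendsto_iff_forall_integral_tendsto] at h
  rw [Metric.tendsto_atTop]
  intro ε hε
  set C := M δ b (k + 2) with hC
  have hCnn : 0 ≤ C := M_nonneg hδ hb.le _
  obtain ⟨R, hR1, hRe⟩ : ∃ R : ℝ, 1 ≤ R ∧ 2 / R ^ 2 * C < ε / 4 := by
    refine ⟨max 1 (Real.sqrt (16 * C / ε) + 1), le_max_left _ _, ?_⟩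
    set R := max 1 (Real.sqrt (16 * C / ε) + 1) with hRdef
    have hR0 : (0:ℝ) < R := lt_of_lt_of_le one_pos (le_max_left _ _)
    have hs : Real.sqrt (16 * C / ε) + 1 ≤ R := le_max_right _ _
    have hsq : 16 * C / ε < R ^ 2 := by
      have h1 : Real.sqrt (16 * C / ε) < R := by linarith
      have h2 : Real.sqrt (16 * C / ε) ^ 2 < R ^ 2 := by
        apply pow_lt_pow_left₀ h1 (Real.sqrt_nonneg _) (by norm_num)
      rwa [Real.sq_sqrt (by positivity)] at h2
    rw [div_lt_iff₀ hε] at hsq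
    rw [div_mul_eq_mul_div, div_lt_iff₀ (by positivity)]
    nlinarith
  have h2 := h (trunc k R)
  rw [Metric.tendsto_atTop] at h2
  obtain ⟨N, hN⟩ := h2 (ε / 4) (by linarith)
  refine ⟨N, fun n hn => ?_⟩
  have e1 := integral_trunc_close hδ hb k hR1 (μn n : Measure ℝ) (hμn n)
  have e2 := integral_trunc_close hδ hb k hR1 (μ : Measure ℝ) hμ
  have e3 := hN n hn
  rw [Real.dist_eq] at e3 ⊢
  set an := ∫ x, x ^ k ∂(μn n : Measure ℝ)
  set a := ∫ x, x ^ k ∂(μ : Measure ℝ)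
  set tn := ∫ x, trunc k R x ∂(μn n : Measure ℝ)
  set t := ∫ x, trunc k R x ∂(μ : Measure ℝ)
  have tri : |an - a| ≤ |an - tn| + |tn - t| + |t - a| := by
    calc |an - a| ≤ |an - tn| + |tn - a| := abs_sub_le an tn a
      _ ≤ |an - tn| + (|tn - t| + |t - a|) := by linarith [abs_sub_le tn t a]
      _ = |an - tn| + |tn - t| + |t - a| := by ring
  have e2' : |t - a| ≤ 2 / R ^ 2 * C := by rwa [abs_sub_comm] at e2
  linarith

end Forward

/-! ### Taylor bound for `exp (i θ)` -/

/-- Remainder of the Taylor expansion of `exp (i θ)`. -/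
def F (J : ℕ) (θ : ℝ) : ℂ :=
  Complex.exp (θ * Complex.I) - ∑ j ∈ Finset.range J, ((θ : ℂ) * Complex.I) ^ j / (j.factorial : ℂ)

lemma continuous_F (J : ℕ) : Continuous (F J) := by
  unfold F
  apply Continuous.sub
  · exact Complex.continuous_exp.comp (Complex.continuous_ofReal.mul continuous_const)
  · apply continuous_finset_sum
    intro j _
    exact ((Complex.continuous_ofReal.mul continuous_const).pow j).div_const _

lemma F_zero_eval (J : ℕ) : F (J + 1) 0 = 0 := by
  unfold F
  rw [Finset.sum_range_succ']
  norm_num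

lemma F_hasDerivAt (J : ℕ) (θ : ℝ) :
    HasDerivAt (F (J + 1)) (Complex.I * F J θ) θ := by
  have hexp : HasDerivAt (fun t : ℝ => Complex.exp ((t : ℂ) * Complex.I))
      (Complex.exp ((θ : ℂ) * Complex.I) * Complex.I) θ := by
    have h0 : HasDerivAt (fun t : ℝ => (t : ℂ)) 1 θ := by
      exact (Complex.ofRealCLM.hasDerivAt (x := θ)).congr_deriv (by simp)
    simpa using (h0.mul_const Complex.I).cexp
  have hterm' : ∀ j : ℕ, HasDerivAt
      (fun t : ℝ => ((t : ℂ) * Complex.I) ^ j / (j.factorial : ℂ))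
      ((j : ℂ) * (θ : ℂ) ^ (j - 1) * Complex.I ^ j / (j.factorial : ℂ)) θ := by
    intro j
    have hp : HasDerivAt (fun t : ℝ => t ^ j) ((j : ℝ) * θ ^ (j - 1)) θ := hasDerivAt_pow j θ
    have hp2 : HasDerivAt (fun t : ℝ => ((t ^ j : ℝ) : ℂ)) (((j : ℝ) * θ ^ (j - 1) : ℝ) : ℂ) θ :=
      hp.ofReal_comp
    have hp3 := (hp2.mul_const (Complex.I ^ j)).div_const ((j.factorial : ℕ) : ℂ)
    have hfun : (fun t : ℝ => ((t ^ j : ℝ) : ℂ) * Complex.I ^ j / (j.factorial : ℂ))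
        = fun t : ℝ => ((t : ℂ) * Complex.I) ^ j / (j.factorial : ℂ) := by
      funext t; rw [mul_pow]; push_cast; ring
    rw [hfun] at hp3
    refine hp3.congr_deriv (Eq.symm ?_)
    push_cast
    ring
  have hsum : HasDerivAt
      (fun t : ℝ => ∑ j ∈ Finset.range (J + 1), ((t : ℂ) * Complex.I) ^ j / (j.factorial : ℂ))
      (∑ j ∈ Finset.range (J + 1),
        (j : ℂ) * (θ : ℂ) ^ (j - 1) * Complex.I ^ j / (j.factorial : ℂ)) θ :=
    HasDerivAt.fun_sum fun j _ => hterm' j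
  have hd := hexp.sub hsum
  refine hd.congr_deriv (Eq.symm ?_)
  rw [Finset.sum_range_succ']
  have hterm : ∀ j : ℕ,
      (((j + 1 : ℕ) : ℂ)) * (θ : ℂ) ^ ((j + 1) - 1) * Complex.I ^ (j + 1)
        / (((j + 1).factorial : ℕ) : ℂ)
      = ((θ : ℂ) * Complex.I) ^ j / (j.factorial : ℂ) * Complex.I := by
    intro j
    have hj : ((j : ℂ) + 1) ≠ 0 := by
      have h := Nat.cast_ne_zero (R := ℂ).mpr (Nat.succ_ne_zero j)
      push_cast at h
      exact h
    rw [Nat.factorial_succ, Nat.succ_sub_one]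
    push_cast
    rw [pow_succ, mul_pow]
    rw [show ((j : ℂ) + 1) * (θ:ℂ) ^ j * (Complex.I ^ j * Complex.I)
        = ((j : ℂ) + 1) * ((θ:ℂ) ^ j * Complex.I ^ j * Complex.I) by ring]
    rw [mul_div_mul_left _ _ hj]
    rw [div_mul_eq_mul_div]
  rw [Finset.sum_congr rfl (fun j _ => hterm j)]
  rw [← Finset.sum_mul]
  unfold F
  norm_num
  ring

lemma F_norm_le_of_nonneg : ∀ (J : ℕ) {θ : ℝ}, 0 ≤ θ → ‖F J θ‖ ≤ θ ^ J / (J.factorial : ℝ) := by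
  intro J
  induction J with
  | zero =>
    intro θ hθ
    simp [F, Complex.norm_exp_ofReal_mul_I]
  | succ J ih =>
    intro θ hθ
    have key : F (J + 1) θ - F (J + 1) 0 = ∫ t in (0:ℝ)..θ, Complex.I * F J t :=
      (intervalIntegral.integral_eq_sub_of_hasDerivAt
        (fun t _ => F_hasDerivAt J t)
        ((continuous_const.mul (continuous_F J)).intervalIntegrable 0 θ)).symm
    rw [F_zero_eval, sub_zero] at key
    rw [key]
    have hbound : ∀ᵐ t ∂(MeasureTheory.volume.restrict (Set.uIoc (0:ℝ) θ)),
        ‖Complex.I * F J t‖ ≤ t ^ J / (J.factorial : ℝ) := by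
      rw [Set.uIoc_of_le hθ]
      filter_upwards [MeasureTheory.ae_restrict_mem measurableSet_Ioc] with t ht
      rw [norm_mul]
      simp only [Complex.norm_I, one_mul]
      exact ih ht.1.le
    have hint : IntervalIntegrable (fun t : ℝ => t ^ J / (J.factorial : ℝ))
        MeasureTheory.volume 0 θ :=
      ((continuous_pow J).div_const _).intervalIntegrable 0 θ
    refine (intervalIntegral.norm_integral_le_abs_of_norm_le hbound hint).trans ?_
    rw [intervalIntegral.integral_div, integral_pow, zero_pow (Nat.succ_ne_zero J), sub_zero]
    rw [abs_of_nonneg (by positivity)]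
    rw [Nat.factorial_succ, div_div]
    push_cast
    ring_nf
    exact le_refl _

lemma F_conj (J : ℕ) (θ : ℝ) : F J (-θ) = starRingEnd ℂ (F J θ) := by
  unfold F
  rw [map_sub, map_sum]
  congr 1
  · rw [← Complex.exp_conj]
    congr 1
    rw [map_mul, Complex.conj_ofReal, Complex.conj_I]
    push_cast
    ring
  · refine Finset.sum_congr rfl fun j _ => ?_
    rw [map_div₀, map_pow, map_natCast, map_mul, Complex.conj_ofReal, Complex.conj_I]
    congr 2
    push_cast
    ring

lemma taylor_bound (J : ℕ) (θ : ℝ) : ‖F J θ‖ ≤ |θ| ^ J / (J.factorial : ℝ) := by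
  rcases le_or_gt 0 θ with h | h
  · rw [abs_of_nonneg h]; exact F_norm_le_of_nonneg J h
  · have h2 := F_norm_le_of_nonneg J (θ := -θ) (by linarith)
    rw [F_conj, RCLike.norm_conj] at h2
    rwa [abs_of_neg h]

/-! ### Moment-characteristic integrals -/

/-- `ψ ν k s = ∫ x^k e^{isx} dν`. -/
def ψ (ν : Measure ℝ) (k : ℕ) (s : ℝ) : ℂ :=
  ∫ x, (x : ℂ) ^ k * Complex.exp ((s * x : ℝ) * Complex.I) ∂ν

lemma psi_integrand_continuous (k : ℕ) (s : ℝ) :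
    Continuous fun x : ℝ => (x : ℂ) ^ k * Complex.exp ((s * x : ℝ) * Complex.I) := by
  apply Continuous.mul
  · exact Complex.continuous_ofReal.pow k
  · exact Complex.continuous_exp.comp
      ((Complex.continuous_ofReal.comp (continuous_const.mul continuous_id)).mul continuous_const)

lemma psi_integrand_norm (k : ℕ) (s x : ℝ) :
    ‖(x : ℂ) ^ k * Complex.exp ((s * x : ℝ) * Complex.I)‖ = |x| ^ k := by
  rw [norm_mul, norm_pow, Complex.norm_real, Real.norm_eq_abs,
    Complex.norm_exp_ofReal_mul_I, mul_one]

section Psi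

variable {δ b : ℝ} (hδ : 0 < δ) (hb : 0 < b)
variable (ν : Measure ℝ) [IsProbabilityMeasure ν] (hν : HB δ b ν)

include hδ hν in
lemma integrable_psi (k : ℕ) (s : ℝ) :
    Integrable (fun x : ℝ => (x : ℂ) ^ k * Complex.exp ((s * x : ℝ) * Complex.I)) ν := by
  refine Integrable.mono' (integrable_abs_pow hδ ν hν k)
    (psi_integrand_continuous k s).aestronglyMeasurable (ae_of_all _ fun x => ?_)
  rw [psi_integrand_norm]

include hδ hb hν in
lemma psi_zero (k : ℕ) : ψ ν k 0 = ((∫ x, x ^ k ∂ν : ℝ) : ℂ) := by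
  unfold ψ
  simp only [zero_mul, Complex.ofReal_zero, Complex.exp_zero, mul_one]
  have h2 := Complex.ofRealCLM.integral_comp_comm (integrable_pow hδ hb ν hν k)
  simp only [Complex.ofRealCLM_apply] at h2
  rw [← h2]
  congr 1
  funext x
  push_cast
  ring

lemma norm_psi_zero_le (s : ℝ) : ‖ψ ν 0 s‖ ≤ 1 := by
  unfold ψ
  refine (norm_integral_le_integral_norm _).trans ?_
  have hc : ∀ x : ℝ, ‖(x : ℂ) ^ 0 * Complex.exp ((s * x : ℝ) * Complex.I)‖ = 1 := by
    intro x
    rw [psi_integrand_norm]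
    simp
  rw [integral_congr_ae (ae_of_all _ hc)]
  simp

include hδ hb hν in
lemma psi_expand (k J : ℕ) (s h : ℝ) :
    ‖ψ ν k (s + h) - ∑ j ∈ Finset.range J,
        ((h : ℂ) * Complex.I) ^ j / (j.factorial : ℂ) * ψ ν (k + j) s‖
      ≤ |h| ^ J / (J.factorial : ℝ) * M δ b (k + J) := by
  have hint : ∀ (m : ℕ) (t : ℝ),
      Integrable (fun x : ℝ => (x : ℂ) ^ m * Complex.exp ((t * x : ℝ) * Complex.I)) ν :=
    fun m t => integrable_psi hδ ν hν m t
  have hpt : ∀ x : ℝ,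
      (x : ℂ) ^ k * Complex.exp (((s + h) * x : ℝ) * Complex.I)
        - ∑ j ∈ Finset.range J, ((h : ℂ) * Complex.I) ^ j / (j.factorial : ℂ)
            * ((x : ℂ) ^ (k + j) * Complex.exp ((s * x : ℝ) * Complex.I))
      = (x : ℂ) ^ k * Complex.exp ((s * x : ℝ) * Complex.I) * F J (h * x) := by
    intro x
    unfold F
    rw [mul_sub]
    congr 1
    · rw [mul_assoc, ← Complex.exp_add]
      congr 2
      push_cast
      ring
    · rw [Finset.mul_sum]
      refine Finset.sum_congr rfl fun j _ => ?_
      rw [pow_add]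
      push_cast
      ring
  have heq : ψ ν k (s + h) - ∑ j ∈ Finset.range J,
        ((h : ℂ) * Complex.I) ^ j / (j.factorial : ℂ) * ψ ν (k + j) s
      = ∫ x, (x : ℂ) ^ k * Complex.exp ((s * x : ℝ) * Complex.I) * F J (h * x) ∂ν := by
    unfold ψ
    simp_rw [← integral_const_mul]
    rw [← integral_finset_sum _ (fun j _ => ((hint (k + j) s).const_mul _)),
      ← integral_sub (hint k (s + h))
        (integrable_finset_sum _ (fun j _ => (hint (k + j) s).const_mul _))]
    exact integral_congr_ae (ae_of_all _ hpt)
  have hptnorm : ∀ x : ℝ,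
      ‖(x : ℂ) ^ k * Complex.exp ((s * x : ℝ) * Complex.I) * F J (h * x)‖
        ≤ |h| ^ J / (J.factorial : ℝ) * |x| ^ (k + J) := by
    intro x
    rw [norm_mul, psi_integrand_norm]
    have h1 : ‖F J (h * x)‖ ≤ |h * x| ^ J / (J.factorial : ℝ) := taylor_bound J (h * x)
    calc |x| ^ k * ‖F J (h * x)‖ ≤ |x| ^ k * (|h * x| ^ J / (J.factorial : ℝ)) := by
          gcongr
      _ = |h| ^ J / (J.factorial : ℝ) * |x| ^ (k + J) := by
          rw [abs_mul, mul_pow, pow_add]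
          ring
  rw [heq]
  refine (norm_integral_le_integral_norm _).trans ?_
  have hgint : Integrable
      (fun x : ℝ => (x : ℂ) ^ k * Complex.exp ((s * x : ℝ) * Complex.I) * F J (h * x)) ν := by
    refine Integrable.mono'
      ((integrable_abs_pow hδ ν hν (k + J)).const_mul (|h| ^ J / (J.factorial : ℝ)))
      ?_ (ae_of_all _ hptnorm)
    exact ((psi_integrand_continuous k s).mul
      ((continuous_F J).comp (continuous_const.mul continuous_id))).aestronglyMeasurable
  refine (integral_mono hgint.norm
    ((integrable_abs_pow hδ ν hν (k + J)).const_mul _) hptnorm).trans ?_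
  rw [integral_const_mul]
  exact mul_le_mul_of_nonneg_left (integral_abs_pow_le hδ hb ν hν (k + J)) (by positivity)

end Psi

lemma fac_le_nat (J k : ℕ) : (J + k).factorial ≤ J.factorial * (J + k) ^ k := by
  induction k with
  | zero => simp
  | succ k ih =>
    have h1 : (J + (k + 1)).factorial = (J + k + 1) * (J + k).factorial := by
      rw [← Nat.add_assoc, Nat.factorial_succ]
    rw [h1]
    calc (J + k + 1) * (J + k).factorial ≤ (J + k + 1) * (J.factorial * (J + k) ^ k) :=
          Nat.mul_le_mul_left _ ih
      _ = J.factorial * ((J + k) ^ k * (J + k + 1)) := by ring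
      _ ≤ J.factorial * ((J + k + 1) ^ k * (J + k + 1)) := by
          exact Nat.mul_le_mul_left _ (Nat.mul_le_mul_right _ (Nat.pow_le_pow_left (Nat.le_succ _) k))
      _ = J.factorial * (J + (k + 1)) ^ (k + 1) := by
          rw [pow_succ, ← Nat.add_assoc]

lemma fac_le (J k : ℕ) : ((k + J).factorial : ℝ) ≤ (J.factorial : ℝ) * ((k : ℝ) + J) ^ k := by
  have := fac_le_nat J k
  rw [Nat.add_comm J k] at this
  calc ((k + J).factorial : ℝ) ≤ ((J.factorial * (k + J) ^ k : ℕ) : ℝ) := by exact_mod_cast this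
    _ = (J.factorial : ℝ) * ((k : ℝ) + J) ^ k := by push_cast; ring

lemma tail_tendsto {δ b : ℝ} (hδ : 0 < δ) (hb : 0 < b) {h : ℝ} (hh : |h| ≤ δ / 2) (k : ℕ) :
    Tendsto (fun J : ℕ => |h| ^ J / (J.factorial : ℝ) * M δ b (k + J)) atTop (𝓝 0) := by
  set C : ℝ := Real.exp δ * b / δ ^ k * 2 ^ k with hC
  have hupper : ∀ J : ℕ, |h| ^ J / (J.factorial : ℝ) * M δ b (k + J)
      ≤ C * (((k : ℝ) + J) ^ k * (1 / 2 : ℝ) ^ (k + J)) := by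
    intro J
    have h1 : |h| ^ J ≤ (δ / 2) ^ J := pow_le_pow_left₀ (abs_nonneg h) hh J
    have h2 := fac_le J k
    have hfJ : (0 : ℝ) < (J.factorial : ℝ) := by positivity
    have step1 : |h| ^ J / (J.factorial : ℝ) * M δ b (k + J)
        ≤ (δ / 2) ^ J / (J.factorial : ℝ)
          * ((J.factorial : ℝ) * ((k : ℝ) + J) ^ k / δ ^ (k + J) * Real.exp δ * b) := by
      unfold M
      gcongr
    refine step1.trans (le_of_eq ?_)
    rw [hC]
    rw [div_pow]
    field_simp
    have h2J : (1 / 2 : ℝ) ^ J * 2 ^ J = 1 := by rw [← mul_pow]; norm_num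
    have h2k : (1 / 2 : ℝ) ^ k * 2 ^ k = 1 := by rw [← mul_pow]; norm_num
    linear_combination (-(δ ^ J * δ ^ k * ((k : ℝ) + J) ^ k * ((1 / 2 : ℝ) ^ k * 2 ^ k))) * h2J
      + (-(δ ^ J * δ ^ k * ((k : ℝ) + J) ^ k)) * h2k
  have hlower : ∀ J : ℕ, 0 ≤ |h| ^ J / (J.factorial : ℝ) * M δ b (k + J) := by
    intro J
    exact mul_nonneg (by positivity) (M_nonneg hδ hb.le _)
  have hgeo : Tendsto (fun n : ℕ => (n : ℝ) ^ k * (1 / 2 : ℝ) ^ n) atTop (𝓝 0) :=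
    (summable_pow_mul_geometric_of_norm_lt_one (R := ℝ) k
      (by rw [Real.norm_eq_abs, abs_of_pos (by norm_num : (0:ℝ) < 1 / 2)]; norm_num)).tendsto_atTop_zero
  have h3 : Tendsto (fun J : ℕ => ((k : ℝ) + J) ^ k * (1 / 2 : ℝ) ^ (k + J)) atTop (𝓝 0) := by
    have h4 := hgeo.comp (tendsto_add_atTop_nat k)
    refine h4.congr fun J => ?_
    simp only [Function.comp_apply]
    push_cast
    rw [add_comm (J : ℝ) (k : ℝ), Nat.add_comm J k]
  have h5 : Tendsto (fun J : ℕ => C * (((k : ℝ) + J) ^ k * (1 / 2 : ℝ) ^ (k + J))) atTop (𝓝 0) := by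
    simpa using h3.const_mul C
  exact squeeze_zero hlower hupper h5

/-! ### The bootstrap: convergence of `ψ` at every frequency -/

section Main

variable {δ b : ℝ} (hδ : 0 < δ) (hb : 0 < b)
variable (μn : ℕ → ProbabilityMeasure ℝ) (μ : ProbabilityMeasure ℝ)
variable (hμn : ∀ n, HB δ b (μn n : Measure ℝ)) (hμ : HB δ b (μ : Measure ℝ))

include hδ hb hμn hμ in
lemma step (s : ℝ)
    (hs : ∀ k, Tendsto (fun n => ψ (μn n : Measure ℝ) k s) atTop (𝓝 (ψ (μ : Measure ℝ) k s)))
    {h : ℝ} (hh : |h| ≤ δ / 2) (k : ℕ) :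
    Tendsto (fun n => ψ (μn n : Measure ℝ) k (s + h)) atTop (𝓝 (ψ (μ : Measure ℝ) k (s + h))) := by
  rw [Metric.tendsto_atTop]
  intro ε hε
  obtain ⟨J, hJ⟩ : ∃ J : ℕ, |h| ^ J / (J.factorial : ℝ) * M δ b (k + J) < ε / 4 :=
    ((tail_tendsto hδ hb hh k).eventually_lt_const (by linarith : (0:ℝ) < ε / 4)).exists
  have hsum := tendsto_finset_sum (Finset.range J)
    (fun j _ => ((hs (k + j)).const_mul (((h : ℂ) * Complex.I) ^ j / (j.factorial : ℂ))))
  rw [Metric.tendsto_atTop] at hsum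
  obtain ⟨N, hN⟩ := hsum (ε / 4) (by linarith)
  refine ⟨N, fun n hn => ?_⟩
  have e1 := psi_expand hδ hb (μn n : Measure ℝ) (hμn n) k J s h
  have e2 := psi_expand hδ hb (μ : Measure ℝ) hμ k J s h
  have e3 := hN n hn
  rw [dist_eq_norm] at e3 ⊢
  have tri := dist_triangle4 (ψ (μn n : Measure ℝ) k (s + h))
    (∑ j ∈ Finset.range J, ((h : ℂ) * Complex.I) ^ j / (j.factorial : ℂ)
        * ψ (μn n : Measure ℝ) (k + j) s)
    (∑ j ∈ Finset.range J, ((h : ℂ) * Complex.I) ^ j / (j.factorial : ℂ)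
        * ψ (μ : Measure ℝ) (k + j) s)
    (ψ (μ : Measure ℝ) k (s + h))
  rw [dist_eq_norm, dist_eq_norm, dist_eq_norm, dist_eq_norm] at tri
  have e2' : ‖(∑ j ∈ Finset.range J, ((h : ℂ) * Complex.I) ^ j / (j.factorial : ℂ)
      * ψ (μ : Measure ℝ) (k + j) s) - ψ (μ : Measure ℝ) k (s + h)‖
      ≤ |h| ^ J / (J.factorial : ℝ) * M δ b (k + J) := by
    rw [norm_sub_rev]
    exact e2
  calc ‖ψ (μn n : Measure ℝ) k (s + h) - ψ (μ : Measure ℝ) k (s + h)‖ ≤ _ := tri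
    _ < ε := by linarith

include hδ hb hμn hμ in
lemma all_s
    (hmom : ∀ k : ℕ, Tendsto (fun n => ∫ x, x ^ k ∂(μn n : Measure ℝ)) atTop
      (𝓝 (∫ x, x ^ k ∂(μ : Measure ℝ)))) :
    ∀ (s : ℝ) (k : ℕ),
      Tendsto (fun n => ψ (μn n : Measure ℝ) k s) atTop (𝓝 (ψ (μ : Measure ℝ) k s)) := by
  have base : ∀ k, Tendsto (fun n => ψ (μn n : Measure ℝ) k 0) atTop
      (𝓝 (ψ (μ : Measure ℝ) k 0)) := by
    intro k
    have hfn : (fun n => ψ (μn n : Measure ℝ) k 0)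
        = fun n => ((∫ x, x ^ k ∂(μn n : Measure ℝ) : ℝ) : ℂ) :=
      funext fun n => psi_zero hδ hb _ (hμn n) k
    rw [hfn, psi_zero hδ hb _ hμ k]
    exact (Complex.continuous_ofReal.tendsto _).comp (hmom k)
  have ind : ∀ m : ℕ, ∀ s : ℝ, |s| ≤ m * (δ / 2) → ∀ k,
      Tendsto (fun n => ψ (μn n : Measure ℝ) k s) atTop (𝓝 (ψ (μ : Measure ℝ) k s)) := by
    intro m
    induction m with
    | zero =>
      intro s hs k
      have hs0 : s = 0 := by
        have : |s| ≤ 0 := by simpa using hs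
        exact abs_nonpos_iff.mp this
      rw [hs0]
      exact base k
    | succ m ih =>
      intro s hs k
      have hm1 : (0:ℝ) < (m : ℝ) + 1 := by positivity
      have hsplit : s = ((m : ℝ) / ((m : ℝ) + 1)) * s + s / ((m : ℝ) + 1) := by
        field_simp
      have habs : |s / ((m : ℝ) + 1)| ≤ δ / 2 := by
        rw [abs_div, abs_of_pos hm1, div_le_iff₀ hm1]
        push_cast at hs
        linarith
      have habs0 : |((m : ℝ) / ((m : ℝ) + 1)) * s| ≤ (m : ℝ) * (δ / 2) := by
        rw [abs_mul, abs_of_nonneg (by positivity : (0:ℝ) ≤ (m : ℝ) / ((m : ℝ) + 1))]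
        push_cast at hs
        calc (m : ℝ) / ((m : ℝ) + 1) * |s| ≤ (m : ℝ) / ((m : ℝ) + 1) * (((m : ℝ) + 1) * (δ / 2)) := by
              gcongr
          _ = (m : ℝ) * (δ / 2) := by field_simp
      have hstep := step hδ hb μn μ hμn hμ _ (ih _ habs0) habs k
      rw [hsplit]
      exact hstep
  intro s k
  obtain ⟨m, hm⟩ := exists_nat_ge (|s| / (δ / 2))
  refine ind m s ?_ k
  rw [div_le_iff₀ (by linarith : (0:ℝ) < δ / 2)] at hm
  linarith

end Main

/-! ### Smooth compactly supported functions are Schwartz -/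

/-- A smooth compactly supported function as a Schwartz function. -/
def toSchwartz (f : ℝ → ℂ) (hf : ContDiff ℝ ((⊤ : ℕ∞)) f) (h2 : HasCompactSupport f) :
    SchwartzMap ℝ ℂ where
  toFun := f
  smooth' := hf
  decay' := by
    intro k n
    have hcont : Continuous fun x : ℝ => ‖x‖ ^ k * ‖iteratedFDeriv ℝ n f x‖ :=
      ((continuous_id.norm.pow k)).mul (hf.continuous_iteratedFDeriv (by exact_mod_cast le_top)).norm
    have hsupp : HasCompactSupport fun x : ℝ => ‖x‖ ^ k * ‖iteratedFDeriv ℝ n f x‖ :=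
      ((h2.iteratedFDeriv n).norm).mul_left
    obtain ⟨C, hC⟩ := hcont.bounded_above_of_compact_support hsupp
    refine ⟨C, fun x => ?_⟩
    have h3 := hC x
    rwa [Real.norm_eq_abs, abs_of_nonneg (by positivity)] at h3

lemma toSchwartz_coe (f : ℝ → ℂ) (hf : ContDiff ℝ ((⊤ : ℕ∞)) f) (h2 : HasCompactSupport f) :
    ⇑(toSchwartz f hf h2) = f := rfl

/-! ### Parseval-type identity -/

lemma psi_continuous (ν : Measure ℝ) [IsProbabilityMeasure ν] :
    Continuous fun s : ℝ => ψ ν 0 s := by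
  unfold ψ
  apply continuous_of_dominated (bound := fun _ : ℝ => (1:ℝ))
  · exact fun s => (psi_integrand_continuous 0 s).aestronglyMeasurable
  · intro s
    refine ae_of_all _ fun x => ?_
    rw [psi_integrand_norm]
    simp
  · exact integrable_const 1
  · refine ae_of_all _ fun x => ?_
    exact continuous_const.mul (Complex.continuous_exp.comp
      ((Complex.continuous_ofReal.comp (continuous_id.mul continuous_const)).mul continuous_const))

lemma parseval (g : SchwartzMap ℝ ℂ) (ν : Measure ℝ) [IsProbabilityMeasure ν] :
    ∫ x, g x ∂ν = ∫ ξ, 𝓕 (⇑g) ξ * ψ ν 0 (2 * π * ξ) := by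
  have hggs : Integrable (𝓕 (⇑g)) volume := by
    have := (SchwartzMap.fourierTransformCLM ℂ g).integrable (μ := volume)
    simpa [SchwartzMap.fourier_coe] using this
  have hggc : Continuous (𝓕 (⇑g)) := by
    have := (SchwartzMap.fourierTransformCLM ℂ g).continuous
    simpa [SchwartzMap.fourier_coe] using this
  have hinv : ∀ x : ℝ, g x = ∫ ξ, Complex.exp ((2 * π * (ξ * x) : ℝ) * Complex.I) * 𝓕 (⇑g) ξ := by
    intro x
    have h1 : 𝓕⁻ (𝓕 ⇑g) = ⇑g :=
      Continuous.fourierInv_fourier_eq g.continuous g.integrable hggs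
    conv_lhs => rw [← h1]
    rw [Real.fourierInv_eq]
    refine integral_congr_ae (ae_of_all _ fun ξ => ?_)
    beta_reduce
    rw [Circle.smul_def, Real.fourierChar_apply, smul_eq_mul, RCLike.inner_apply, conj_trivial, mul_comm x ξ]

  have hker : Continuous (Function.uncurry fun (x ξ : ℝ) =>
      Complex.exp ((2 * π * (ξ * x) : ℝ) * Complex.I) * 𝓕 (⇑g) ξ) := by
    apply Continuous.mul
    · exact Complex.continuous_exp.comp
        ((Complex.continuous_ofReal.comp (by fun_prop)).mul continuous_const)
    · exact hggc.comp continuous_snd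
  have hnorm : ∀ (x ξ : ℝ),
      ‖Complex.exp ((2 * π * (ξ * x) : ℝ) * Complex.I) * 𝓕 (⇑g) ξ‖ = ‖𝓕 (⇑g) ξ‖ := by
    intro x ξ
    rw [norm_mul, Complex.norm_exp_ofReal_mul_I, one_mul]
  have hF : Integrable (Function.uncurry fun (x ξ : ℝ) =>
      Complex.exp ((2 * π * (ξ * x) : ℝ) * Complex.I) * 𝓕 (⇑g) ξ) (ν.prod volume) := by
    rw [integrable_prod_iff hker.aestronglyMeasurable]
    constructor
    · refine ae_of_all _ fun x => ?_
      refine Integrable.mono' hggs.norm ?_ (ae_of_all _ fun ξ => ?_)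
      · exact (hker.comp (Continuous.prodMk_right x)).aestronglyMeasurable
      · simp only [Function.uncurry_apply_pair]
        exact le_of_eq (hnorm x ξ)
    · refine Integrable.congr (integrable_const (∫ ξ, ‖𝓕 (⇑g) ξ‖)) ?_
      refine ae_of_all _ fun x => ?_
      simp only [Function.uncurry_apply_pair]
      exact integral_congr_ae (ae_of_all _ fun ξ => (hnorm x ξ).symm)
  have hswap := integral_integral_swap hF
  calc ∫ x, g x ∂ν
      = ∫ x, ∫ ξ, Complex.exp ((2 * π * (ξ * x) : ℝ) * Complex.I) * 𝓕 (⇑g) ξ ∂volume ∂ν := by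
        exact integral_congr_ae (ae_of_all _ hinv)
    _ = ∫ ξ, ∫ x, Complex.exp ((2 * π * (ξ * x) : ℝ) * Complex.I) * 𝓕 (⇑g) ξ ∂ν ∂volume := hswap
    _ = ∫ ξ, 𝓕 (⇑g) ξ * ψ ν 0 (2 * π * ξ) := by
        refine integral_congr_ae (ae_of_all _ fun ξ => ?_)
        beta_reduce
        rw [integral_mul_const]
        rw [mul_comm]
        congr 1
        unfold ψ
        refine integral_congr_ae (ae_of_all _ fun x => ?_)
        simp only [pow_zero, one_mul]
        congr 2
        ring

section Main2

variable {δ b : ℝ} (hδ : 0 < δ) (hb : 0 < b)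
variable (μn : ℕ → ProbabilityMeasure ℝ) (μ : ProbabilityMeasure ℝ)
variable (hμn : ∀ n, HB δ b (μn n : Measure ℝ)) (hμ : HB δ b (μ : Measure ℝ))

include hδ hb hμn hμ in
lemma schwartz_tendsto
    (hmom : ∀ k : ℕ, Tendsto (fun n => ∫ x, x ^ k ∂(μn n : Measure ℝ)) atTop
      (𝓝 (∫ x, x ^ k ∂(μ : Measure ℝ))))
    (g : SchwartzMap ℝ ℂ) :
    Tendsto (fun n => ∫ x, g x ∂(μn n : Measure ℝ)) atTop (𝓝 (∫ x, g x ∂(μ : Measure ℝ))) := by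
  have hA := all_s hδ hb μn μ hμn hμ hmom
  have h1 : (fun n => ∫ x, g x ∂(μn n : Measure ℝ))
      = fun n => ∫ ξ, 𝓕 (⇑g) ξ * ψ (μn n : Measure ℝ) 0 (2 * π * ξ) :=
    funext fun n => parseval g _
  rw [h1, parseval g]
  have hggs : Integrable (𝓕 (⇑g)) volume := by
    have := (SchwartzMap.fourierTransformCLM ℂ g).integrable (μ := volume)
    simpa [SchwartzMap.fourier_coe] using this
  have hggc : Continuous (𝓕 (⇑g)) := by
    have := (SchwartzMap.fourierTransformCLM ℂ g).continuous
    simpa [SchwartzMap.fourier_coe] using this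
  refine tendsto_integral_of_dominated_convergence (fun ξ => ‖𝓕 (⇑g) ξ‖) ?_ hggs.norm ?_ ?_
  · intro n
    exact (hggc.mul ((psi_continuous (μn n : Measure ℝ)).comp
      (continuous_const.mul continuous_id))).aestronglyMeasurable
  · intro n
    refine ae_of_all _ fun ξ => ?_
    rw [norm_mul]
    calc ‖𝓕 (⇑g) ξ‖ * ‖ψ (μn n : Measure ℝ) 0 (2 * π * ξ)‖
        ≤ ‖𝓕 (⇑g) ξ‖ * 1 := by
          gcongr
          exact norm_psi_zero_le (μn n : Measure ℝ) (2 * π * ξ)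
      _ = ‖𝓕 (⇑g) ξ‖ := mul_one _
  · refine ae_of_all _ fun ξ => ?_
    exact (hA (2 * π * ξ) 0).const_mul _

include hδ hb hμn hμ in
lemma converse
    (hmom : ∀ k : ℕ, Tendsto (fun n => ∫ x, x ^ k ∂(μn n : Measure ℝ)) atTop
      (𝓝 (∫ x, x ^ k ∂(μ : Measure ℝ)))) :
    Tendsto μn atTop (𝓝 μ) := by
  apply MeasureTheory.tendsto_of_forall_isOpen_le_liminf
  intro U hU
  refine le_of_forall_lt_imp_le_of_dense fun c hc => ?_
  have hc' : (c : ENNReal) < (μ : Measure ℝ) U := by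
    rw [← MeasureTheory.ProbabilityMeasure.ennreal_coeFn_eq_coeFn_toMeasure]
    exact_mod_cast hc
  obtain ⟨K, hKU, hKcomp, hcK⟩ := hU.exists_lt_isCompact hc'
  obtain ⟨R, hKR⟩ := hKcomp.isBounded.subset_ball 0
  set U' := U ∩ Metric.ball 0 R with hU'def
  have hU'open : IsOpen U' := hU.inter Metric.isOpen_ball
  have hKU' : K ⊆ U' := Set.subset_inter hKU hKR
  have hbdd : Bornology.IsBounded U' := Metric.isBounded_ball.subset Set.inter_subset_right
  have hclosure : IsCompact (closure U') :=
    Metric.isCompact_of_isClosed_isBounded isClosed_closure hbdd.closure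
  obtain ⟨f, hf0, hf1, hf01⟩ := exists_contMDiffMap_zero_one_of_isClosed (n := (⊤ : ℕ∞)) (𝓘(ℝ, ℝ))
    hU'open.isClosed_compl hKcomp.isClosed (disjoint_compl_left.mono_right hKU')
  have hfc : ContDiff ℝ ((⊤ : ℕ∞)) ⇑f := f.contMDiff.contDiff
  have hsupp : Function.support ⇑f ⊆ U' := by
    intro x hx
    by_contra hxU
    exact hx (hf0 hxU)
  have hfcs : HasCompactSupport ⇑f := by
    refine IsCompact.of_isClosed_subset hclosure isClosed_closure ?_
    exact closure_mono hsupp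
  have hfcD : ContDiff ℝ ((⊤ : ℕ∞)) (fun x => ((f x : ℝ) : ℂ)) :=
    Complex.ofRealCLM.contDiff.comp hfc
  have hfccs : HasCompactSupport (fun x => ((f x : ℝ) : ℂ)) :=
    hfcs.comp_left (g := fun r : ℝ => (r : ℂ)) Complex.ofReal_zero
  have hgt := schwartz_tendsto hδ hb μn μ hμn hμ hmom (toSchwartz _ hfcD hfccs)
  simp only [toSchwartz_coe] at hgt
  have hfint : ∀ (ν : Measure ℝ) [IsProbabilityMeasure ν], Integrable ⇑f ν := by
    intro ν _
    exact f.contMDiff.continuous.integrable_of_hasCompactSupport hfcs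
  have hre : ∀ (ν : Measure ℝ) [IsProbabilityMeasure ν],
      ∫ x, ((f x : ℝ) : ℂ) ∂ν = ((∫ x, f x ∂ν : ℝ) : ℂ) := by
    intro ν _
    have h2 := Complex.ofRealCLM.integral_comp_comm (hfint ν)
    simpa using h2
  have hrt : Tendsto (fun n => ∫ x, f x ∂(μn n : Measure ℝ)) atTop
      (𝓝 (∫ x, f x ∂(μ : Measure ℝ))) := by
    have h3 : (fun n => ∫ x, ((f x : ℝ) : ℂ) ∂(μn n : Measure ℝ))
        = fun n => ((∫ x, f x ∂(μn n : Measure ℝ) : ℝ) : ℂ) := funext fun n => hre _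
    rw [h3, hre] at hgt
    have h4 := (Complex.continuous_re.tendsto _).comp hgt
    simpa [Function.comp_def] using h4
  have hub : ∀ n, ∫ x, f x ∂(μn n : Measure ℝ) ≤ ((μn n U : ℝ≥0) : ℝ) := by
    intro n
    have hind : ∫ x, f x ∂(μn n : Measure ℝ)
        ≤ ∫ x, Set.indicator U (fun _ => (1:ℝ)) x ∂(μn n : Measure ℝ) := by
      refine integral_mono (hfint _) ((integrable_const (1:ℝ)).indicator hU.measurableSet)
        fun x => ?_
      by_cases hx : x ∈ U
      · rw [Set.indicator_of_mem hx]
        exact (hf01 x).2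
      · rw [Set.indicator_of_notMem hx]
        have hx' : x ∈ U'ᶜ := fun hxU' => hx hxU'.1
        have h5 := hf0 hx'
        simp only [Pi.zero_apply] at h5
        rw [h5]
    rw [integral_indicator_const (1:ℝ) hU.measurableSet, smul_eq_mul, mul_one] at hind
    refine hind.trans (le_of_eq ?_)
    rfl
  have hlb : ((μ : Measure ℝ) K).toReal ≤ ∫ x, f x ∂(μ : Measure ℝ) := by
    have hind : ∫ x, Set.indicator K (fun _ => (1:ℝ)) x ∂(μ : Measure ℝ)
        ≤ ∫ x, f x ∂(μ : Measure ℝ) := by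
      refine integral_mono ((integrable_const (1:ℝ)).indicator hKcomp.isClosed.measurableSet)
        (hfint _) fun x => ?_
      by_cases hx : x ∈ K
      · rw [Set.indicator_of_mem hx]
        have h5 := hf1 hx
        simp only [Pi.one_apply] at h5
        exact le_of_eq h5.symm
      · rw [Set.indicator_of_notMem hx]
        exact (hf01 x).1
    rwa [integral_indicator_const (1:ℝ) hKcomp.isClosed.measurableSet, smul_eq_mul, mul_one]
      at hind
  have hcR : (c : ℝ) < ((μ : Measure ℝ) K).toReal := by
    have hfin : (μ : Measure ℝ) K ≠ ⊤ := measure_ne_top _ _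
    have h6 := ENNReal.toReal_strict_mono hfin hcK
    simpa using h6
  have hev : ∀ᶠ n in atTop, (c : ℝ) < ∫ x, f x ∂(μn n : Measure ℝ) :=
    hrt.eventually_const_lt (lt_of_lt_of_le hcR hlb)
  have hev2 : ∀ᶠ n in atTop, c ≤ μn n U := by
    filter_upwards [hev] with n hn
    have h6 : (c : ℝ) < ((μn n U : ℝ≥0) : ℝ) := lt_of_lt_of_le hn (hub n)
    exact_mod_cast h6.le
  refine le_liminf_of_le ?_ hev2
  exact Filter.IsBoundedUnder.isCoboundedUnder_ge
    (Filter.isBoundedUnder_of ⟨1, fun n => MeasureTheory.ProbabilityMeasure.apply_le_one _ _⟩)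

end Main2

end WCIM

end

open MeasureTheory Real Filter Topology

/-- Within `𝓜_b = {μ : ∫ e_δ dμ ≤ b}`, weak convergence of probability measures
is equivalent to convergence of all moments. -/
theorem weak_convergence_iff_moments
    (δ b : ℝ) (hδ : 0 < δ) (hb : 0 < b)
    (μn : ℕ → ProbabilityMeasure ℝ) (μ : ProbabilityMeasure ℝ)
    (hμn : ∀ n, ∫⁻ x, ENNReal.ofReal (Real.exp (δ * (Real.sqrt (x ^ 2 + 1) - 1)))
        ∂(μn n : Measure ℝ) ≤ ENNReal.ofReal b)
    (hμ : ∫⁻ x, ENNReal.ofReal (Real.exp (δ * (Real.sqrt (x ^ 2 + 1) - 1)))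
        ∂(μ : Measure ℝ) ≤ ENNReal.ofReal b) :
    Tendsto μn atTop (𝓝 μ) ↔
      ∀ k : ℕ, Tendsto (fun n => ∫ x, x ^ k ∂(μn n : Measure ℝ)) atTop
        (𝓝 (∫ x, x ^ k ∂(μ : Measure ℝ))) := by
  constructor
  · intro h k
    exact WCIM.forward hδ hb μn μ hμn hμ h k
  · intro h
    exact WCIM.converse hδ hb μn μ hμn hμ h
end

section
/- Let δ, C₀ > 0, let γ be a Borel probability measure on ℝ with L_γ := ∫ exp(δ|y|) dγ(y) < ∞, and set K* := (δC₀/2)(2 + C₀ + δC₀) + C₀(L_γ − 1). Let e_δ(x) := exp(δ(√(x²+1) − 1)). Then for any functions b, σ, λ : ℝ → ℝ with |b(x)| ≤ C₀, |σ(x)| ≤ C₀, 0 ≤ λ(x) ≤ C₀ for all x, the following holds for every x ∈ ℝ: b(x) e_δ'(x) + (1/2) σ(x)² e_δ''(x) + λ(x) ∫_ℝ (e_δ(x+y) − e_δ(x)) dγ(y) ≤ K* e_δ(x). -/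
open MeasureTheory Real

set_option maxHeartbeats 1000000 in
/-- Generator bound for the Lyapunov function: with coefficients bounded by `C₀`
and jump distribution `γ` with `δ`-exponential moment `L_γ`, the generator applied
to `e_δ` is bounded by `K* e_δ` where
`K* = (δC₀/2)(2 + C₀ + δC₀) + C₀(L_γ − 1)`. -/
theorem generator_bound_e_delta
    (δ C₀ : ℝ) (hδ : 0 < δ) (hC₀ : 0 < C₀)
    (γ : Measure ℝ) [IsProbabilityMeasure γ]
    (hexp : Integrable (fun y => Real.exp (δ * |y|)) γ)
    (Lγ : ℝ) (hLγ : Lγ = ∫ y, Real.exp (δ * |y|) ∂γ)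
    (Kstar : ℝ)
    (hK : Kstar = δ * C₀ / 2 * (2 + C₀ + δ * C₀) + C₀ * (Lγ - 1))
    (e : ℝ → ℝ) (he : e = fun x => Real.exp (δ * (Real.sqrt (x ^ 2 + 1) - 1)))
    (b σ lam : ℝ → ℝ)
    (hb : ∀ x, |b x| ≤ C₀) (hσ : ∀ x, |σ x| ≤ C₀)
    (hlam : ∀ x, 0 ≤ lam x ∧ lam x ≤ C₀) :
    ∀ x : ℝ,
      b x * deriv e x + (1 / 2) * (σ x) ^ 2 * deriv (deriv e) x +
        lam x * ∫ y, (e (x + y) - e x) ∂γ ≤ Kstar * e x := by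
  intro x
  -- abbreviation for the sqrt function
  set s : ℝ → ℝ := fun z => Real.sqrt (z ^ 2 + 1) with hs_def
  have hs_pos : ∀ z : ℝ, 0 < s z := fun z => Real.sqrt_pos.mpr (by positivity)
  have hs_sq : ∀ z : ℝ, s z ^ 2 = z ^ 2 + 1 := fun z => Real.sq_sqrt (by positivity)
  have hs_one : ∀ z : ℝ, 1 ≤ s z := by
    intro z
    nlinarith [hs_pos z, hs_sq z, sq_nonneg z]
  have habs_le : ∀ z : ℝ, |z| ≤ s z := by
    intro z
    have h : |z| = Real.sqrt (z ^ 2) := (Real.sqrt_sq_eq_abs z).symm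
    rw [h]
    exact Real.sqrt_le_sqrt (by linarith)
  have he_pos : ∀ z : ℝ, 0 < e z := by
    intro z; rw [he]; positivity
  have he' : e = fun w => Real.exp (δ * (s w - 1)) := by rw [he]
  -- derivative of s
  have hsd : ∀ z : ℝ, HasDerivAt s (z / s z) z := by
    intro z
    have h1 : HasDerivAt (fun w : ℝ => w ^ 2 + 1) (2 * z) z := by
      simpa using (hasDerivAt_pow 2 z).add_const 1
    have h2 := (Real.hasDerivAt_sqrt (by positivity : (z : ℝ) ^ 2 + 1 ≠ 0)).comp z h1
    refine h2.congr_deriv ?_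
    show _ = z / Real.sqrt (z ^ 2 + 1)
    field_simp
  -- derivative of e
  have hed : ∀ z : ℝ, HasDerivAt e (δ * (z / s z) * e z) z := by
    intro z
    have h := (((hsd z).sub_const 1).const_mul δ).exp
    rw [he']
    convert h using 1
    show δ * (z / s z) * Real.exp (δ * (s z - 1))
        = Real.exp (δ * (s z - 1)) * (δ * (z / s z))
    ring
  have hderiv1 : deriv e = fun z => δ * (z / s z) * e z := funext fun z => (hed z).deriv
  -- second derivative
  have hqd : ∀ z : ℝ, HasDerivAt (fun w => w / s w)
      ((1 * s z - z * (z / s z)) / s z ^ 2) z := by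
    intro z
    exact (hasDerivAt_id z).div (hsd z) (hs_pos z).ne'
  have hq_eq : ∀ z : ℝ, (1 * s z - z * (z / s z)) / s z ^ 2 = 1 / s z ^ 3 := by
    intro z
    have hne := (hs_pos z).ne'
    field_simp
    linear_combination hs_sq z
  have hfun : (fun w => δ * (w / s w) * e w) = fun w => δ * (w / s w * e w) := by
    funext w; ring
  have hed2 : ∀ z : ℝ, HasDerivAt (fun w => δ * (w / s w * e w))
      (δ * ((1 / s z ^ 3) * e z + (z / s z) * (δ * (z / s z) * e z))) z := by
    intro z
    have h := ((hqd z).mul (hed z)).const_mul δ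
    rw [hq_eq z] at h
    exact h
  have hderiv2 : deriv (deriv e) x
      = δ * ((1 / s x ^ 3) * e x + (x / s x) * (δ * (x / s x) * e x)) := by
    rw [hderiv1, hfun]
    exact (hed2 x).deriv
  -- bound on |x / s x|
  have hratio : ∀ z : ℝ, |z / s z| ≤ 1 := by
    intro z
    rw [abs_div, abs_of_pos (hs_pos z)]
    exact (div_le_one (hs_pos z)).mpr (habs_le z)
  -- drift term bound
  have hdrift : b x * deriv e x ≤ C₀ * δ * e x := by
    rw [hderiv1]
    have h1 : b x * (x / s x) ≤ C₀ := by
      calc b x * (x / s x) ≤ |b x * (x / s x)| := le_abs_self _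
        _ = |b x| * |x / s x| := abs_mul _ _
        _ ≤ C₀ * 1 := mul_le_mul (hb x) (hratio x) (abs_nonneg _) hC₀.le
        _ = C₀ := mul_one _
    have h2 := mul_le_mul_of_nonneg_right h1 (mul_nonneg hδ.le (he_pos x).le)
    calc b x * (δ * (x / s x) * e x) = (b x * (x / s x)) * (δ * e x) := by ring
      _ ≤ C₀ * (δ * e x) := h2
      _ = C₀ * δ * e x := by ring
  -- second-derivative term bound
  have hE0 : (0:ℝ) ≤ e x := (he_pos x).le
  have hA0 : (0:ℝ) ≤ 1 / s x ^ 3 := le_of_lt (div_pos one_pos (pow_pos (hs_pos x) 3))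
  have hD2_nonneg : 0 ≤ deriv (deriv e) x := by
    rw [hderiv2]
    have hA : (0:ℝ) ≤ 1 / s x ^ 3 * e x := mul_nonneg hA0 hE0
    have hB : (0:ℝ) ≤ x / s x * (δ * (x / s x) * e x) := by
      have h : x / s x * (δ * (x / s x) * e x) = δ * (x / s x) ^ 2 * e x := by ring
      rw [h]
      exact mul_nonneg (mul_nonneg hδ.le (sq_nonneg _)) hE0
    exact mul_nonneg hδ.le (add_nonneg hA hB)
  have hD2_le : deriv (deriv e) x ≤ δ * (1 + δ) * e x := by
    rw [hderiv2]
    have h1 : 1 / s x ^ 3 ≤ 1 := by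
      rw [div_le_one (pow_pos (hs_pos x) 3)]
      have h3 := pow_le_pow_left₀ (by norm_num : (0:ℝ) ≤ 1) (hs_one x) 3
      simpa using h3
    have h2 : (x / s x) ^ 2 ≤ 1 := by
      have h := hratio x
      nlinarith [abs_nonneg (x / s x), sq_abs (x / s x)]
    nlinarith [mul_le_mul_of_nonneg_right h1 hE0,
      mul_le_mul_of_nonneg_right (mul_le_mul_of_nonneg_right h2 hE0) (mul_pos hδ hδ).le,
      hδ.le]
  have hσsq : (σ x) ^ 2 ≤ C₀ ^ 2 := by
    have h := hσ x
    nlinarith [abs_nonneg (σ x), sq_abs (σ x)]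
  have hdiff : (1 / 2) * (σ x) ^ 2 * deriv (deriv e) x
      ≤ (1 / 2) * C₀ ^ 2 * (δ * (1 + δ) * e x) := by
    have h1 : (1 / 2) * (σ x) ^ 2 * deriv (deriv e) x
        ≤ (1 / 2) * C₀ ^ 2 * deriv (deriv e) x := by
      nlinarith [hD2_nonneg]
    have h2 : (1 / 2) * C₀ ^ 2 * deriv (deriv e) x
        ≤ (1 / 2) * C₀ ^ 2 * (δ * (1 + δ) * e x) := by
      nlinarith [hD2_le, sq_nonneg C₀]
    linarith
  -- Lipschitz bound for s and the jump term
  have hLip : ∀ y : ℝ, s (x + y) ≤ s x + |y| := by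
    intro y
    have h1 : x * y ≤ s x * |y| := by
      calc x * y ≤ |x * y| := le_abs_self _
        _ = |x| * |y| := abs_mul _ _
        _ ≤ s x * |y| := mul_le_mul_of_nonneg_right (habs_le x) (abs_nonneg _)
    have h2 : (x + y) ^ 2 + 1 ≤ (s x + |y|) ^ 2 := by
      nlinarith [hs_sq x, sq_abs y]
    calc s (x + y) = Real.sqrt ((x + y) ^ 2 + 1) := rfl
      _ ≤ Real.sqrt ((s x + |y|) ^ 2) := Real.sqrt_le_sqrt h2
      _ = s x + |y| := Real.sqrt_sq (by positivity)
  have hjump_pt : ∀ y : ℝ, e (x + y) ≤ e x * Real.exp (δ * |y|) := by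
    intro y
    rw [he']
    show Real.exp (δ * (s (x + y) - 1)) ≤ Real.exp (δ * (s x - 1)) * Real.exp (δ * |y|)
    rw [← Real.exp_add]
    apply Real.exp_le_exp.mpr
    have h := hLip y
    nlinarith [mul_le_mul_of_nonneg_left h hδ.le]
  have hcont : Continuous fun y : ℝ => e (x + y) - e x := by
    rw [he]
    fun_prop
  have hInt : Integrable (fun y => e (x + y) - e x) γ := by
    apply Integrable.mono' ((hexp.const_mul (e x)).add (integrable_const (e x)))
      hcont.aestronglyMeasurable
    filter_upwards with y
    simp only [Pi.add_apply, Real.norm_eq_abs]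
    rw [abs_le]
    constructor
    · have h1 := (he_pos (x + y)).le
      have h3 : (0:ℝ) ≤ e x * Real.exp (δ * |y|) := by positivity
      linarith
    · have h2 := hjump_pt y
      linarith
  have hIntBnd : Integrable (fun y => e x * Real.exp (δ * |y|) - e x) γ :=
    (hexp.const_mul (e x)).sub (integrable_const (e x))
  have hI : ∫ y, (e (x + y) - e x) ∂γ ≤ e x * (Lγ - 1) := by
    have hmono := integral_mono hInt hIntBnd (fun y => by
      have h := hjump_pt y; simp only; linarith)
    have hcalc : ∫ y, (e x * Real.exp (δ * |y|) - e x) ∂γ = e x * (Lγ - 1) := by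
      rw [integral_sub (hexp.const_mul (e x)) (integrable_const (e x)),
        integral_const_mul, integral_const]
      simp only [probReal_univ, measure_univ, ENNReal.toReal_one, smul_eq_mul, one_mul]
      rw [hLγ]; ring
    linarith
  have hjump : lam x * ∫ y, (e (x + y) - e x) ∂γ ≤ C₀ * ((Lγ - 1) * e x) := by
    obtain ⟨hl0, hl1⟩ := hlam x
    have hLγ_one : 1 ≤ Lγ := by
      rw [hLγ]
      have h1 : ∫ (_ : ℝ), (1:ℝ) ∂γ = 1 := by simp
      rw [← h1]
      exact integral_mono (integrable_const 1) hexp (fun y => by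
        simpa using Real.one_le_exp (by positivity))
    have hRHS : (0:ℝ) ≤ (Lγ - 1) * e x := by nlinarith
    rcases le_or_gt (∫ y, (e (x + y) - e x) ∂γ) 0 with h | h
    · have h0 : lam x * ∫ y, (e (x + y) - e x) ∂γ ≤ 0 :=
        mul_nonpos_of_nonneg_of_nonpos hl0 h
      nlinarith
    · have h1 : lam x * ∫ y, (e (x + y) - e x) ∂γ
          ≤ C₀ * ∫ y, (e (x + y) - e x) ∂γ :=
        mul_le_mul_of_nonneg_right hl1 h.le
      have h2 : C₀ * ∫ y, (e (x + y) - e x) ∂γ ≤ C₀ * (e x * (Lγ - 1)) :=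
        mul_le_mul_of_nonneg_left hI hC₀.le
      nlinarith
  -- combine
  have hsum : C₀ * δ * e x + (1 / 2) * C₀ ^ 2 * (δ * (1 + δ) * e x)
      + C₀ * ((Lγ - 1) * e x) = Kstar * e x := by
    rw [hK]; ring
  linarith [hdrift, hdiff, hjump]
end
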